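/- Let f : [0,1] → [0,1]² be continuous with f(0) = (0,0) and f(1) = (1,1). Let a, r, s, ε ∈ ℚ with 0 < r < s, cl B(f(a), s) ⊆ (0,1)² and ε > 0. Then there exist rationals r̄, s̄ with r < r̄ < s̄ < s and open intervals I, J with rational endpoints such that K_{a,s̄} ∪ K_{a,r̄} ⊆ I, L_{a,r̄} ∪ L_{a,s̄} ⊆ J, length(I) < ε and length(J) < ε. -/

import Mathlib

open Set

noncomputable section

/-- The Euclidean plane. -/
abbrev E2 := EuclideanSpace ℝ (Fin 2)

/-- The point `(x, y)` of the Euclidean plane. -/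
def pt (x y : ℝ) : E2 := WithLp.toLp 2 ![x, y]

/-- The closed unit square `[0,1]²`. -/
def unitSq : Set E2 := {p | p 0 ∈ Icc (0:ℝ) 1 ∧ p 1 ∈ Icc (0:ℝ) 1}

/-- The open unit square `(0,1)²`. -/
def openUnitSq : Set E2 := {p | p 0 ∈ Ioo (0:ℝ) 1 ∧ p 1 ∈ Ioo (0:ℝ) 1}

/-- `p_{a,r} = inf{ b ∈ (0,a) ∩ ℚ : f([b,a]) ⊆ B(f(a),r) }`. -/
def pTime (f : ℝ → E2) (a r : ℝ) : ℝ :=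
  sInf {b : ℝ | (∃ q : ℚ, (q:ℝ) = b) ∧ b ∈ Ioo 0 a ∧
    MapsTo f (Icc b a) (Metric.ball (f a) r)}

/-- `q_{a,r} = sup{ b ∈ (a,1) ∩ ℚ : f([a,b]) ⊆ B(f(a),r) }`. -/
def qTime (f : ℝ → E2) (a r : ℝ) : ℝ :=
  sSup {b : ℝ | (∃ q : ℚ, (q:ℝ) = b) ∧ b ∈ Ioo a 1 ∧
    MapsTo f (Icc a b) (Metric.ball (f a) r)}

/-- `p'_{a,r} = sup{ b ∈ (0,a) ∩ ℚ : f(b) ∉ cl B(f(a),r) }`. -/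
def pTime' (f : ℝ → E2) (a r : ℝ) : ℝ :=
  sSup {b : ℝ | (∃ q : ℚ, (q:ℝ) = b) ∧ b ∈ Ioo 0 a ∧
    f b ∉ closure (Metric.ball (f a) r)}

/-- `q'_{a,r} = inf{ b ∈ (a,1) ∩ ℚ : f(b) ∉ cl B(f(a),r) }`. -/
def qTime' (f : ℝ → E2) (a r : ℝ) : ℝ :=
  sInf {b : ℝ | (∃ q : ℚ, (q:ℝ) = b) ∧ b ∈ Ioo a 1 ∧
    f b ∉ closure (Metric.ball (f a) r)}

/-- `K_{a,r} = [p'_{a,r}, p_{a,r}]`. -/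
def Kint (f : ℝ → E2) (a r : ℝ) : Set ℝ := Icc (pTime' f a r) (pTime f a r)

/-- `L_{a,r} = [q_{a,r}, q'_{a,r}]`. -/
def Lint (f : ℝ → E2) (a r : ℝ) : Set ℝ := Icc (qTime f a r) (qTime' f a r)

/-!
Moving away from `a` in time, the path leaves `cl B(f a, t₁)` no later than `B(f a, t₂)` when
`t₁ < t₂`, so `p_{t₂} ≤ p'_{t₁} ≤ p_{t₁}` and `q_{t₁} ≤ q'_{t₁} ≤ q_{t₂}`. Hence `p` decreases
in `[0, a]` and `q` increases in `[a, 1]` as the radius grows, and `K_t ⊆ [p_v, p_u]`,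
`L_t ⊆ [q_u, q_v]` whenever `u < t < v`. As `q - p` stays in `[0, 1]`, among `N > 1 / ε`
consecutive subintervals of `(r, s)` there is one, `(u, v)`, on which `q - p` grows by less than
`ε`; any rationals `u < r̄ < s̄ < v` then do.
-/

open Set Filter Topology Metric

section Continuity

variable {X : Type*} [TopologicalSpace X] {f : ℝ → X} {α β x : ℝ} {U : Set X}

theorem ContinuousOn.exists_Ioc_subset_preimage (hf : ContinuousOn f (Icc α β))
    (hx : x ∈ Ioc α β) (hU : U ∈ 𝓝 (f x)) : ∃ l ∈ Iio x, Ioc l x ⊆ f ⁻¹' U :=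
  mem_nhdsLE_iff_exists_Ioc_subset.mp <|
    (hf x (Ioc_subset_Icc_self hx)).mono_of_mem_nhdsWithin (Icc_mem_nhdsLE_of_mem hx) hU

theorem ContinuousOn.exists_Ico_subset_preimage (hf : ContinuousOn f (Icc α β))
    (hx : x ∈ Ico α β) (hU : U ∈ 𝓝 (f x)) : ∃ u ∈ Ioi x, Ico x u ⊆ f ⁻¹' U :=
  mem_nhdsGE_iff_exists_Ico_subset.mp <|
    (hf x (Ico_subset_Icc_self hx)).mono_of_mem_nhdsWithin (Icc_mem_nhdsGE_of_mem hx) hU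

end Continuity

section Balls

variable {Y : Type*} [PseudoMetricSpace Y] {x y : Y} {t u : ℝ}

theorem notMem_closure_ball_of_le (hy : y ∉ closure (ball x u)) (htu : t ≤ u) :
    y ∉ closure (ball x t) :=
  fun h => hy (closure_mono (ball_subset_ball htu) h)

theorem closure_ball_subset_ball (htu : t < u) : closure (ball x t) ⊆ ball x u :=
  closure_ball_subset_closedBall.trans (closedBall_subset_ball htu)

end Balls

theorem exists_sub_lt_of_mapsTo_Icc {g : ℝ → ℝ} {r s m M ε : ℝ} (hrs : r < s)
    (hg : MapsTo g (Ioo r s) (Icc m M)) (hε : 0 < ε) :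
    ∃ u v, r < u ∧ u < v ∧ v < s ∧ g v - g u < ε := by
  by_contra! h
  obtain ⟨N, hN⟩ := exists_nat_gt ((M - m) / ε)
  set δ := (s - r) / (N + 2)
  have hδ : 0 < δ := div_pos (sub_pos.2 hrs) (by positivity)
  have hδs : (N + 2) * δ = s - r := mul_div_cancel₀ _ (by positivity)
  set x : ℕ → ℝ := fun k => r + (k + 1) * δ
  have hx : ∀ k ≤ N, x k ∈ Ioo r s := by
    intro k hk
    have : (k : ℝ) ≤ N := by exact_mod_cast hk
    constructor <;> nlinarith
  have hgrow : ∀ k ≤ N, k * ε ≤ g (x k) - g (x 0) := by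
    intro k
    induction k with
    | zero => simp
    | succ k ih =>
      intro hk
      have hstep := h (x k) (x (k + 1)) (hx k (by omega)).1 (by simp only [x]; push_cast; linarith)
        (hx (k + 1) hk).2
      push_cast
      linarith [ih (by omega)]
  have hN' : M - m < N * ε := (div_lt_iff₀ hε).mp hN
  linarith [hgrow N le_rfl, (hg (hx N le_rfl)).2, (hg (hx 0 N.zero_le)).1]

theorem exists_rat_Icc_subset_Ioo {x y ε : ℝ} (h : y - x < ε) :
    ∃ c d : ℚ, Icc x y ⊆ Ioo (c : ℝ) d ∧ (d : ℝ) - c < ε := by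
  obtain ⟨c, hc, hcx⟩ := exists_rat_btwn (show x - (ε - (y - x)) / 2 < x by linarith)
  obtain ⟨d, hyd, hd⟩ := exists_rat_btwn (show y < y + (ε - (y - x)) / 2 by linarith)
  exact ⟨c, d, Icc_subset_Ioo hcx hyd, by linarith⟩

theorem pt_zero_zero_notMem_openUnitSq : pt 0 0 ∉ openUnitSq := by
  simp [pt, openUnitSq]

theorem pt_one_one_notMem_openUnitSq : pt 1 1 ∉ openUnitSq := by
  simp [pt, openUnitSq]

def pSet (f : ℝ → E2) (a t : ℝ) : Set ℝ :=
  {b | (∃ q : ℚ, (q : ℝ) = b) ∧ b ∈ Ioo 0 a ∧ MapsTo f (Icc b a) (ball (f a) t)}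

def pSet' (f : ℝ → E2) (a t : ℝ) : Set ℝ :=
  {b | (∃ q : ℚ, (q : ℝ) = b) ∧ b ∈ Ioo 0 a ∧ f b ∉ closure (ball (f a) t)}

def qSet (f : ℝ → E2) (a t : ℝ) : Set ℝ :=
  {b | (∃ q : ℚ, (q : ℝ) = b) ∧ b ∈ Ioo a 1 ∧ MapsTo f (Icc a b) (ball (f a) t)}

def qSet' (f : ℝ → E2) (a t : ℝ) : Set ℝ :=
  {b | (∃ q : ℚ, (q : ℝ) = b) ∧ b ∈ Ioo a 1 ∧ f b ∉ closure (ball (f a) t)}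

section ExitTimes

variable {f : ℝ → E2} {a t u v : ℝ}

theorem pSet_bddBelow : BddBelow (pSet f a t) := ⟨0, fun _ hb => hb.2.1.1.le⟩

theorem pSet'_bddAbove : BddAbove (pSet' f a t) := ⟨a, fun _ hb => hb.2.1.2.le⟩

theorem qSet_bddAbove : BddAbove (qSet f a t) := ⟨1, fun _ hb => hb.2.1.2.le⟩

theorem qSet'_bddBelow : BddBelow (qSet' f a t) := ⟨a, fun _ hb => hb.2.1.1.le⟩

variable (hfc : ContinuousOn f (Icc 0 1)) (ha : a ∈ Ioo 0 1)
include hfc ha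

theorem pSet_nonempty (ht : 0 < t) : (pSet f a t).Nonempty := by
  obtain ⟨l, hla, hl⟩ :=
    hfc.exists_Ioc_subset_preimage ⟨ha.1, ha.2.le⟩ (ball_mem_nhds (f a) ht)
  obtain ⟨b, hlb, hba⟩ := exists_rat_btwn (max_lt ha.1 hla)
  rw [max_lt_iff] at hlb
  exact ⟨b, ⟨b, rfl⟩, ⟨hlb.1, hba⟩, fun x hx => hl ⟨hlb.2.trans_le hx.1, hx.2⟩⟩

theorem pSet'_nonempty (h0 : f 0 ∉ closure (ball (f a) t)) : (pSet' f a t).Nonempty := by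
  obtain ⟨u, hu0, hu⟩ := hfc.exists_Ico_subset_preimage ⟨le_rfl, zero_lt_one⟩
    (isClosed_closure.isOpen_compl.mem_nhds h0)
  obtain ⟨b, h0b, hbu⟩ := exists_rat_btwn (lt_min ha.1 hu0)
  rw [lt_min_iff] at hbu
  exact ⟨b, ⟨b, rfl⟩, ⟨h0b, hbu.1⟩, hu ⟨h0b.le, hbu.2⟩⟩

theorem qSet_nonempty (ht : 0 < t) : (qSet f a t).Nonempty := by
  obtain ⟨u, hau, hu⟩ :=
    hfc.exists_Ico_subset_preimage ⟨ha.1.le, ha.2⟩ (ball_mem_nhds (f a) ht)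
  obtain ⟨b, hab, hbu⟩ := exists_rat_btwn (lt_min ha.2 hau)
  rw [lt_min_iff] at hbu
  exact ⟨b, ⟨b, rfl⟩, ⟨hab, hbu.1⟩, fun x hx => hu ⟨hx.1, hx.2.trans_lt hbu.2⟩⟩

theorem qSet'_nonempty (h1 : f 1 ∉ closure (ball (f a) t)) : (qSet' f a t).Nonempty := by
  obtain ⟨l, hl1, hl⟩ := hfc.exists_Ioc_subset_preimage ⟨zero_lt_one, le_rfl⟩
    (isClosed_closure.isOpen_compl.mem_nhds h1)
  obtain ⟨b, hb, hb1⟩ := exists_rat_btwn (max_lt ha.2 hl1)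
  rw [max_lt_iff] at hb
  exact ⟨b, ⟨b, rfl⟩, ⟨hb.1, hb1⟩, hl ⟨hb.2, hb1.le⟩⟩

theorem pTime_mem_Icc (ht : 0 < t) : pTime f a t ∈ Icc 0 a := by
  obtain ⟨b, hb⟩ := pSet_nonempty hfc ha ht
  exact ⟨Real.sInf_nonneg fun _ hx => hx.2.1.1.le,
    (csInf_le pSet_bddBelow hb).trans hb.2.1.2.le⟩

theorem qTime_mem_Icc (ht : 0 < t) : qTime f a t ∈ Icc a 1 := by
  obtain ⟨b, hb⟩ := qSet_nonempty hfc ha ht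
  exact ⟨hb.2.1.1.le.trans (le_csSup qSet_bddAbove hb),
    Real.sSup_le (fun _ hx => hx.2.1.2.le) zero_le_one⟩

theorem pTime'_le_pTime (h0 : f 0 ∉ closure (ball (f a) t)) (ht : 0 < t) :
    pTime' f a t ≤ pTime f a t :=
  csSup_le (pSet'_nonempty hfc ha h0) fun _ hb => le_csInf (pSet_nonempty hfc ha ht) fun _ hb' =>
    le_of_not_gt fun hlt => hb.2.2 (subset_closure (hb'.2.2 ⟨hlt.le, hb.2.1.2.le⟩))

theorem qTime_le_qTime' (h1 : f 1 ∉ closure (ball (f a) t)) (ht : 0 < t) :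
    qTime f a t ≤ qTime' f a t :=
  csSup_le (qSet_nonempty hfc ha ht) fun _ hb => le_csInf (qSet'_nonempty hfc ha h1) fun _ hb' =>
    le_of_not_gt fun hlt => hb'.2.2 (subset_closure (hb.2.2 ⟨hb'.2.1.1.le, hlt.le⟩))

theorem pTime_le_pTime' (h0 : f 0 ∉ closure (ball (f a) t)) (ht : 0 < t) (htu : t < u) :
    pTime f a u ≤ pTime' f a t := by
  set m := pTime' f a t
  obtain ⟨b₀, hb₀⟩ := pSet'_nonempty hfc ha h0
  have hm0 : 0 < m := hb₀.2.1.1.trans_le (le_csSup pSet'_bddAbove hb₀)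
  have hma : m < a := by
    obtain ⟨l, hla, hl⟩ :=
      hfc.exists_Ioc_subset_preimage ⟨ha.1, ha.2.le⟩ (ball_mem_nhds (f a) ht)
    refine (csSup_le ⟨b₀, hb₀⟩ fun b hb => le_of_not_gt fun hlb => ?_).trans_lt hla
    exact hb.2.2 (subset_closure (hl ⟨hlb, hb.2.1.2.le⟩))
  -- a later exit from `cl B(f a, t)` would produce a rational of `pSet'` beyond its supremum
  have hclosed : ∀ x ∈ Ioc m a, f x ∈ closure (ball (f a) t) := by
    intro x hx
    by_contra hfx
    obtain ⟨l, hlx, hl⟩ := hfc.exists_Ioc_subset_preimage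
      ⟨hm0.trans hx.1, hx.2.trans ha.2.le⟩ (isClosed_closure.isOpen_compl.mem_nhds hfx)
    obtain ⟨b, hb, hbx⟩ := exists_rat_btwn (max_lt hx.1 hlx)
    rw [max_lt_iff] at hb
    have hbS : (b : ℝ) ∈ pSet' f a t :=
      ⟨⟨b, rfl⟩, ⟨hm0.trans hb.1, hbx.trans_le hx.2⟩, hl ⟨hb.2, hbx.le⟩⟩
    exact (le_csSup pSet'_bddAbove hbS).not_gt hb.1
  refine le_of_forall_gt_imp_ge_of_dense fun c hmc => ?_
  obtain ⟨b, hmb, hbc⟩ := exists_rat_btwn (lt_min hmc hma)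
  rw [lt_min_iff] at hbc
  have hbS : (b : ℝ) ∈ pSet f a u := ⟨⟨b, rfl⟩, ⟨hm0.trans hmb, hbc.2⟩, fun x hx =>
    closure_ball_subset_ball htu (hclosed x ⟨hmb.trans_le hx.1, hx.2⟩)⟩
  exact (csInf_le pSet_bddBelow hbS).trans hbc.1.le

theorem qTime'_le_qTime (h1 : f 1 ∉ closure (ball (f a) t)) (ht : 0 < t) (htu : t < u) :
    qTime' f a t ≤ qTime f a u := by
  set m := qTime' f a t
  obtain ⟨b₀, hb₀⟩ := qSet'_nonempty hfc ha h1
  have hm1 : m < 1 := (csInf_le qSet'_bddBelow hb₀).trans_lt hb₀.2.1.2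
  have ham : a < m := by
    obtain ⟨l, hal, hl⟩ :=
      hfc.exists_Ico_subset_preimage ⟨ha.1.le, ha.2⟩ (ball_mem_nhds (f a) ht)
    refine hal.trans_le (le_csInf ⟨b₀, hb₀⟩ fun b hb => le_of_not_gt fun hbl => ?_)
    exact hb.2.2 (subset_closure (hl ⟨hb.2.1.1.le, hbl⟩))
  -- an earlier exit from `cl B(f a, t)` would produce a rational of `qSet'` below its infimum
  have hclosed : ∀ x ∈ Ico a m, f x ∈ closure (ball (f a) t) := by
    intro x hx
    by_contra hfx
    obtain ⟨l, hxl, hl⟩ := hfc.exists_Ico_subset_preimage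
      ⟨ha.1.le.trans hx.1, hx.2.trans hm1⟩ (isClosed_closure.isOpen_compl.mem_nhds hfx)
    obtain ⟨b, hxb, hb⟩ := exists_rat_btwn (lt_min hx.2 hxl)
    rw [lt_min_iff] at hb
    have hbS : (b : ℝ) ∈ qSet' f a t :=
      ⟨⟨b, rfl⟩, ⟨hx.1.trans_lt hxb, hb.1.trans hm1⟩, hl ⟨hxb.le, hb.2⟩⟩
    exact (csInf_le qSet'_bddBelow hbS).not_gt hb.1
  refine le_of_forall_lt_imp_le_of_dense fun c hcm => ?_
  obtain ⟨b, hcb, hbm⟩ := exists_rat_btwn (max_lt hcm ham)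
  rw [max_lt_iff] at hcb
  have hbS : (b : ℝ) ∈ qSet f a u := ⟨⟨b, rfl⟩, ⟨hcb.2, hbm.trans hm1⟩, fun x hx =>
    closure_ball_subset_ball htu (hclosed x ⟨hx.1, hx.2.trans_lt hbm⟩)⟩
  exact hcb.1.le.trans (le_csSup qSet_bddAbove hbS)

theorem pTime_le_pTime (h0 : f 0 ∉ closure (ball (f a) u)) (hu : 0 < u) (huv : u < v) :
    pTime f a v ≤ pTime f a u :=
  (pTime_le_pTime' hfc ha h0 hu huv).trans (pTime'_le_pTime hfc ha h0 hu)

theorem qTime_le_qTime (h1 : f 1 ∉ closure (ball (f a) u)) (hu : 0 < u) (huv : u < v) :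
    qTime f a u ≤ qTime f a v :=
  (qTime_le_qTime' hfc ha h1 hu).trans (qTime'_le_qTime hfc ha h1 hu huv)

theorem Kint_subset_Icc (h0 : f 0 ∉ closure (ball (f a) t)) (hu : 0 < u) (hut : u < t)
    (htv : t < v) : Kint f a t ⊆ Icc (pTime f a v) (pTime f a u) :=
  Icc_subset_Icc (pTime_le_pTime' hfc ha h0 (hu.trans hut) htv)
    (pTime_le_pTime hfc ha (notMem_closure_ball_of_le h0 hut.le) hu hut)

theorem Lint_subset_Icc (h1 : f 1 ∉ closure (ball (f a) t)) (hu : 0 < u) (hut : u < t)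
    (htv : t < v) : Lint f a t ⊆ Icc (qTime f a u) (qTime f a v) :=
  Icc_subset_Icc (qTime_le_qTime hfc ha (notMem_closure_ball_of_le h1 hut.le) hu hut)
    (qTime'_le_qTime hfc ha h1 (hu.trans hut) htv)

theorem qTime_sub_pTime_mem_Icc (ht : 0 < t) : qTime f a t - pTime f a t ∈ Icc 0 1 := by
  have hp := pTime_mem_Icc hfc ha ht
  have hq := qTime_mem_Icc hfc ha ht
  constructor <;> linarith [hp.1, hp.2, hq.1, hq.2]

end ExitTimes

theorem small_trapping_intervals_general (f : ℝ → E2)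
    (hfc : ContinuousOn f (Icc 0 1))
    (hf0 : f 0 = pt 0 0) (hf1 : f 1 = pt 1 1)
    (a r s ε : ℚ) (ha : (a:ℝ) ∈ Ioo (0:ℝ) 1) (hr : (0:ℝ) < r) (hrs : (r:ℝ) < s)
    (hball : closure (Metric.ball (f a) s) ⊆ openUnitSq) (hε : (0:ℝ) < ε) :
    ∃ rb sb : ℚ, r < rb ∧ rb < sb ∧ sb < s ∧
      ∃ c₁ d₁ c₂ d₂ : ℚ,
        Kint f a sb ∪ Kint f a rb ⊆ Ioo (c₁:ℝ) d₁ ∧ (d₁:ℝ) - c₁ < ε ∧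
        Lint f a rb ∪ Lint f a sb ⊆ Ioo (c₂:ℝ) d₂ ∧ (d₂:ℝ) - c₂ < ε := by
  have h0 : ∀ t ≤ (s : ℝ), f 0 ∉ closure (ball (f a) t) := fun t ht =>
    notMem_closure_ball_of_le (fun h => pt_zero_zero_notMem_openUnitSq (hf0 ▸ hball h)) ht
  have h1 : ∀ t ≤ (s : ℝ), f 1 ∉ closure (ball (f a) t) := fun t ht =>
    notMem_closure_ball_of_le (fun h => pt_one_one_notMem_openUnitSq (hf1 ▸ hball h)) ht
  obtain ⟨u, v, hru, huv, hvs, hgap⟩ := exists_sub_lt_of_mapsTo_Icc hrs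
    (fun t ht => qTime_sub_pTime_mem_Icc hfc ha (hr.trans ht.1)) hε
  have hu : 0 < u := hr.trans hru
  have hp := pTime_le_pTime hfc ha (h0 u (huv.trans hvs).le) hu huv
  have hq := qTime_le_qTime hfc ha (h1 u (huv.trans hvs).le) hu huv
  obtain ⟨c₁, d₁, hK, hd₁⟩ :=
    exists_rat_Icc_subset_Ioo (show pTime f a u - pTime f a v < ε by linarith)
  obtain ⟨c₂, d₂, hL, hd₂⟩ :=
    exists_rat_Icc_subset_Ioo (show qTime f a v - qTime f a u < ε by linarith)
  obtain ⟨rb, hurb, hrbv⟩ := exists_rat_btwn huv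
  obtain ⟨sb, hrbsb, hsbv⟩ := exists_rat_btwn hrbv
  refine ⟨rb, sb, by exact_mod_cast hru.trans hurb, by exact_mod_cast hrbsb,
    by exact_mod_cast hsbv.trans hvs, c₁, d₁, c₂, d₂, ?_, hd₁, ?_, hd₂⟩
  · refine (union_subset ?_ ?_).trans hK
    · exact Kint_subset_Icc hfc ha (h0 sb (hsbv.trans hvs).le) hu (hurb.trans hrbsb) hsbv
    · exact Kint_subset_Icc hfc ha (h0 rb (hrbv.trans hvs).le) hu hurb hrbv
  · refine (union_subset ?_ ?_).trans hL
    · exact Lint_subset_Icc hfc ha (h1 rb (hrbv.trans hvs).le) hu hurb hrbv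
    · exact Lint_subset_Icc hfc ha (h1 sb (hsbv.trans hvs).le) hu (hurb.trans hrbsb) hsbv

/-- Between radii `r < s` one can find radii `r̄ < s̄` whose exit intervals are trapped in
arbitrarily short rational intervals. -/
theorem small_trapping_intervals (f : ℝ → E2)
    (hfc : ContinuousOn f (Icc 0 1)) (hfm : MapsTo f (Icc 0 1) unitSq)
    (hf0 : f 0 = pt 0 0) (hf1 : f 1 = pt 1 1)
    (a r s ε : ℚ) (ha : (a:ℝ) ∈ Ioo (0:ℝ) 1) (hr : (0:ℝ) < r) (hrs : (r:ℝ) < s)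
    (hball : closure (Metric.ball (f a) s) ⊆ openUnitSq) (hε : (0:ℝ) < ε) :
    ∃ rb sb : ℚ, r < rb ∧ rb < sb ∧ sb < s ∧
      ∃ c₁ d₁ c₂ d₂ : ℚ,
        Kint f a sb ∪ Kint f a rb ⊆ Ioo (c₁:ℝ) d₁ ∧ (d₁:ℝ) - c₁ < ε ∧
        Lint f a rb ∪ Lint f a sb ⊆ Ioo (c₂:ℝ) d₂ ∧ (d₂:ℝ) - c₂ < ε :=
  small_trapping_intervals_general f hfc hf0 hf1 a r s ε ha hr hrs hball hε
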